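/- Let a₁,a₂,a₃ and φ₁,φ₂,φ₃ be indeterminates (indices mod 3) and define the automorphism s₁ by s₁(a₁)=1/a₁, s₁(a₂)=a₂a₁, s₁(a₃)=a₃a₁, s₁(φ₁)=φ₁/a₁, s₁(φ₂)=φ₂(a₁+φ₁)/(1+φ₁), s₁(φ₃)=φ₃(1+φ₁)/(1+φ₁/a₁). Then s₁ is an involution of ℂ(a₁,a₂,a₃,φ₁,φ₂,φ₃). -/

import Mathlib

noncomputable section

/-- The rational function field `ℂ(a₁,a₂,a₃,φ₁,φ₂,φ₃)`. -/
abbrev K : Type := FractionRing (MvPolynomial (Fin 6) ℂ)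

def X (i : Fin 6) : K := algebraMap (MvPolynomial (Fin 6) ℂ) K (MvPolynomial.X i)

def a1 : K := X 0
def a2 : K := X 1
def a3 : K := X 2
def φ1 : K := X 3
def φ2 : K := X 4
def φ3 : K := X 5

/-! An algebra map out of a rational function field is determined by the images of the
variables, so it suffices to check that `s ∘ s` fixes the six generators, which is a direct
computation once the denominators `a₁`, `1 + φ₁`, `a₁ + φ₁` are known to be nonzero. -/

theorem FractionRing.mvPolynomial_algHom_ext {σ R B : Type*} [CommRing R] [Semiring B]
    [Algebra R B] {f g : FractionRing (MvPolynomial σ R) →ₐ[R] B}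
    (h : ∀ i, f (algebraMap (MvPolynomial σ R) _ (.X i)) =
      g (algebraMap (MvPolynomial σ R) _ (.X i))) : f = g :=
  IsLocalization.algHom_ext (nonZeroDivisors _) (MvPolynomial.algHom_ext h)

lemma a1_ne_zero : a1 ≠ 0 :=
  IsFractionRing.to_map_eq_zero_iff.not.mpr (MvPolynomial.X_ne_zero 0)

lemma one_add_φ1_ne_zero : 1 + φ1 ≠ 0 := by
  have hp : (1 + MvPolynomial.X 3 : MvPolynomial (Fin 6) ℂ) ≠ 0 := fun h => by
    simpa using congrArg (MvPolynomial.eval 0) h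
  simpa [φ1, X] using IsFractionRing.to_map_eq_zero_iff (K := K).not.mpr hp

lemma a1_add_φ1_ne_zero : a1 + φ1 ≠ 0 := by
  have hp : (MvPolynomial.X 0 + MvPolynomial.X 3 : MvPolynomial (Fin 6) ℂ) ≠ 0 := fun h => by
    simpa [one_add_one_eq_two] using congrArg (MvPolynomial.eval 1) h
  simpa [a1, φ1, X] using IsFractionRing.to_map_eq_zero_iff (K := K).not.mpr hp

section Generators

variable {s : K ≃ₐ[ℂ] K} (h1 : s a1 = 1 / a1)
include h1

lemma apply_apply_a1 : s (s a1) = a1 := by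
  rw [h1, map_div₀, map_one, h1, one_div_one_div]

lemma apply_apply_a2 (h2 : s a2 = a2 * a1) : s (s a2) = a2 := by
  rw [h2, map_mul, h2, h1]
  field_simp [a1_ne_zero]

lemma apply_apply_a3 (h3 : s a3 = a3 * a1) : s (s a3) = a3 := by
  rw [h3, map_mul, h3, h1]
  field_simp [a1_ne_zero]

lemma apply_apply_φ1 (h4 : s φ1 = φ1 / a1) : s (s φ1) = φ1 := by
  rw [h4, map_div₀, h4, h1]
  field_simp [a1_ne_zero]

lemma apply_apply_φ2 (h4 : s φ1 = φ1 / a1) (h5 : s φ2 = φ2 * (a1 + φ1) / (1 + φ1)) :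
    s (s φ2) = φ2 := by
  rw [h5, map_div₀, map_mul, map_add, map_add, map_one, h5, h1, h4]
  field_simp [a1_ne_zero, one_add_φ1_ne_zero, a1_add_φ1_ne_zero]

lemma apply_apply_φ3 (h4 : s φ1 = φ1 / a1)
    (h6 : s φ3 = φ3 * (1 + φ1) / (1 + φ1 / a1)) : s (s φ3) = φ3 := by
  rw [h6, map_div₀, map_mul, map_add, map_add, map_one, map_div₀, h6, h4, h1]
  field_simp [a1_ne_zero, one_add_φ1_ne_zero, a1_add_φ1_ne_zero]

end Generators

/-- the Bäcklund transformation `s₁` of the q-Painlevé system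
is an involution of `ℂ(a₁,a₂,a₃,φ₁,φ₂,φ₃)`. -/
theorem stmt16 (s : K ≃ₐ[ℂ] K)
    (h1 : s a1 = 1 / a1)
    (h2 : s a2 = a2 * a1)
    (h3 : s a3 = a3 * a1)
    (h4 : s φ1 = φ1 / a1)
    (h5 : s φ2 = φ2 * (a1 + φ1) / (1 + φ1))
    (h6 : s φ3 = φ3 * (1 + φ1) / (1 + φ1 / a1)) :
    ∀ k : K, s (s k) = k := by
  have hss : ((s.trans s : K ≃ₐ[ℂ] K) : K →ₐ[ℂ] K) = AlgHom.id ℂ K := by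
    refine FractionRing.mvPolynomial_algHom_ext fun i => ?_
    fin_cases i
    · exact apply_apply_a1 h1
    · exact apply_apply_a2 h1 h2
    · exact apply_apply_a3 h1 h3
    · exact apply_apply_φ1 h1 h4
    · exact apply_apply_φ2 h1 h4 h5
    · exact apply_apply_φ3 h1 h4 h6
  exact fun k => AlgHom.congr_fun hss k
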